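/- Fix n ≥ 1 and s ∈ (0,1), and define K(x,y) := C_{n,s} · y^{2s}/(|x|² + y²)^{n/2 + s} on ℝⁿ × (0,∞). Then at every point (x,y) with y > 0 the function K satisfies ((1 − 2s)/(2y)) · ∂K/∂y + (1/2) Δ_{x,y} K = 0, where Δ_{x,y} denotes the Laplacian in all n + 1 variables (x₁, …, xₙ, y). -/

import Mathlib

open MeasureTheory Real

/-!
Up to the constant `C_{n,s}`, `K = y^{2s} w^{-α}` with `w = |x|² + y²` and `α = n/2 + s`.
Since `K` is a function of `|x|²` in the `x` variables, its `x`-Laplacian is `2n h' + 4|x|² h''`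
for `h(u) = y^{2s} (u + y²)^{-α}`, and the `y`-derivatives are computed directly. Collecting
the coefficients of `y^{2s-2} w^{-α}` and of `y^{2s} w^{-α-1}`, the first vanishes because
`y^{2s}` is annihilated by `∂²_y + ((1 - 2s)/y) ∂_y`, the second because `2α = n + 2s`.
-/

/-- The Poisson-type kernel `K_y(x) = C_{n,s} · y^{2s} / (|x|² + y²)^{n/2+s}`, where
`C_{n,s} = Γ(s + n/2) / (π^{n/2} Γ(s))`. -/
noncomputable def fracPoissonKernel (n : ℕ) (s : ℝ) (y : ℝ) (x : EuclideanSpace ℝ (Fin n)) : ℝ :=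
  (Real.Gamma (s + n / 2) / (Real.pi ^ ((n : ℝ) / 2) * Real.Gamma s))
    * y ^ (2 * s) / (‖x‖ ^ 2 + y ^ 2) ^ ((n : ℝ) / 2 + s)

section Radial

variable {E : Type*} [NormedAddCommGroup E] [InnerProductSpace ℝ E]

lemma norm_add_smul_sq (x v : E) (t : ℝ) :
    ‖x + t • v‖ ^ 2 = ‖x‖ ^ 2 + 2 * inner ℝ x v * t + ‖v‖ ^ 2 * t ^ 2 := by
  rw [norm_add_sq_real, real_inner_smul_right, norm_smul, mul_pow, Real.norm_eq_abs, sq_abs]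
  ring

lemma hasDerivAt_norm_add_smul_sq (x v : E) (t : ℝ) :
    HasDerivAt (fun t : ℝ => ‖x + t • v‖ ^ 2) (2 * inner ℝ x v + 2 * ‖v‖ ^ 2 * t) t := by
  rw [funext (norm_add_smul_sq x v)]
  exact ((((hasDerivAt_id t).const_mul _).const_add _).add
    ((hasDerivAt_pow 2 t).const_mul _)).congr_deriv (by simp only [mul_one, Nat.cast_ofNat, Nat.add_one_sub_one, pow_one]; ring)

lemma deriv_deriv_comp_norm_add_smul_sq {h h' : ℝ → ℝ} {h'' : ℝ} (x v : E)
    (hh : ∀ u, 0 ≤ u → HasDerivAt h (h' u) u) (hh' : HasDerivAt h' h'' (‖x‖ ^ 2)) :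
    deriv (deriv fun t : ℝ => h (‖x + t • v‖ ^ 2)) 0
      = 2 * ‖v‖ ^ 2 * h' (‖x‖ ^ 2) + 4 * inner ℝ x v ^ 2 * h'' := by
  have hd : deriv (fun t : ℝ => h (‖x + t • v‖ ^ 2))
      = fun t => h' (‖x + t • v‖ ^ 2) * (2 * inner ℝ x v + 2 * ‖v‖ ^ 2 * t) :=
    funext fun t => ((hh _ (by positivity)).comp t (hasDerivAt_norm_add_smul_sq x v t)).deriv
  have hlin : HasDerivAt (fun t : ℝ => 2 * inner ℝ x v + 2 * ‖v‖ ^ 2 * t) (2 * ‖v‖ ^ 2) 0 :=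
    (((hasDerivAt_id 0).const_mul _).const_add _).congr_deriv (mul_one _)
  have hd' := (HasDerivAt.comp_of_eq 0 hh' (hasDerivAt_norm_add_smul_sq x v 0) (by simp)).mul hlin
  rw [hd]
  refine hd'.deriv.trans ?_
  simp only [Function.comp, zero_smul, add_zero, mul_zero]
  ring

lemma sum_deriv_deriv_comp_norm_add_single_sq {n : ℕ} {h h' : ℝ → ℝ} {h'' : ℝ}
    (x : EuclideanSpace ℝ (Fin n))
    (hh : ∀ u, 0 ≤ u → HasDerivAt h (h' u) u) (hh' : HasDerivAt h' h'' (‖x‖ ^ 2)) :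
    ∑ i, deriv (deriv fun t : ℝ => h (‖x + t • EuclideanSpace.single i (1 : ℝ)‖ ^ 2)) 0
      = 2 * n * h' (‖x‖ ^ 2) + 4 * ‖x‖ ^ 2 * h'' := by
  simp only [deriv_deriv_comp_norm_add_smul_sq x _ hh hh', PiLp.norm_single, norm_one,
    EuclideanSpace.inner_single_right, one_mul, conj_trivial]
  rw [Finset.sum_add_distrib, ← Finset.mul_sum, ← Finset.sum_mul, ← Finset.mul_sum,
    ← EuclideanSpace.real_norm_sq_eq]
  simp only [one_pow, mul_one, Finset.sum_const, Finset.card_univ, Fintype.card_fin, nsmul_eq_mul]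
  ring

end Radial

lemma hasDerivAt_rpow_mul_add_sq_rpow {u y : ℝ} (p q : ℝ) (hy : y ≠ 0) (hw : 0 < u + y ^ 2) :
    HasDerivAt (fun z : ℝ => z ^ p * (u + z ^ 2) ^ q)
      (p * (y ^ (p - 1) * (u + y ^ 2) ^ q) + 2 * q * (y ^ (p + 1) * (u + y ^ 2) ^ (q - 1))) y := by
  have hbase : HasDerivAt (fun z : ℝ => u + z ^ 2) (2 * y) y := by
    simpa using (hasDerivAt_pow 2 y).const_add u
  refine ((hasDerivAt_rpow_const (Or.inl hy)).mul
    (hbase.rpow_const (Or.inl hw.ne'))).congr_deriv ?_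
  rw [rpow_add_one hy]
  ring

lemma deriv_deriv_rpow_mul_add_sq_rpow {u y : ℝ} (p q : ℝ) (hu : 0 ≤ u) (hy : 0 < y) :
    deriv (deriv fun z : ℝ => z ^ p * (u + z ^ 2) ^ q) y
      = p * (p - 1) * y ^ (p - 2) * (u + y ^ 2) ^ q
        + 2 * q * (2 * p + 1) * y ^ p * (u + y ^ 2) ^ (q - 1)
        + 4 * q * (q - 1) * y ^ (p + 2) * (u + y ^ 2) ^ (q - 2) := by
  have hw : 0 < u + y ^ 2 := by positivity
  have hderiv : deriv (fun z : ℝ => z ^ p * (u + z ^ 2) ^ q) =ᶠ[nhds y] fun z =>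
      p * (z ^ (p - 1) * (u + z ^ 2) ^ q) + 2 * q * (z ^ (p + 1) * (u + z ^ 2) ^ (q - 1)) := by
    filter_upwards [Ioi_mem_nhds hy] with z (hz : 0 < z)
    exact (hasDerivAt_rpow_mul_add_sq_rpow p q hz.ne' (by positivity)).deriv
  rw [hderiv.deriv_eq]
  refine (((hasDerivAt_rpow_mul_add_sq_rpow (p - 1) q hy.ne' hw).const_mul p).add
    ((hasDerivAt_rpow_mul_add_sq_rpow (p + 1) (q - 1) hy.ne' hw).const_mul (2 * q))).deriv.trans ?_
  rw [sub_sub, sub_add_cancel, add_sub_cancel_right, add_assoc, sub_sub]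
  simp only [one_add_one_eq_two]
  ring

/-- Half the Caffarelli–Silvestre operator `y^{2s-1} div_{x,y}(y^{1-2s} ∇F)`. -/
noncomputable def extensionOperator (n : ℕ) (s : ℝ) (F : ℝ → EuclideanSpace ℝ (Fin n) → ℝ)
    (x : EuclideanSpace ℝ (Fin n)) (y : ℝ) : ℝ :=
  ((1 - 2 * s) / (2 * y)) * deriv (fun y' : ℝ => F y' x) y
    + (1 / 2) *
      ((∑ i : Fin n, deriv (deriv fun t : ℝ => F y (x + t • EuclideanSpace.single i (1 : ℝ))) 0)
        + deriv (deriv fun y' : ℝ => F y' x) y)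

lemma extensionOperator_const_mul (n : ℕ) (s c : ℝ) (F : ℝ → EuclideanSpace ℝ (Fin n) → ℝ)
    (x : EuclideanSpace ℝ (Fin n)) (y : ℝ) :
    extensionOperator n s (fun y x => c * F y x) x y = c * extensionOperator n s F x y := by
  simp only [extensionOperator, deriv_const_mul_field', ← Finset.mul_sum]
  ring

lemma fracPoissonKernel_eq_const_mul (n : ℕ) (s : ℝ) :
    fracPoissonKernel n s = fun y x => Real.Gamma (s + n / 2) / (π ^ ((n : ℝ) / 2) * Real.Gamma s)
      * (y ^ (2 * s) * (‖x‖ ^ 2 + y ^ 2) ^ (-((n : ℝ) / 2 + s))) := by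
  ext y x
  rw [fracPoissonKernel, rpow_neg (by positivity), mul_div_assoc, div_eq_mul_inv (y ^ (2 * s))]

lemma extensionOperator_rpow_mul_norm_sq_add_sq_rpow (n : ℕ) (s : ℝ)
    (x : EuclideanSpace ℝ (Fin n)) {y : ℝ} (hy : 0 < y) :
    extensionOperator n s
      (fun y x => y ^ (2 * s) * (‖x‖ ^ 2 + y ^ 2) ^ (-((n : ℝ) / 2 + s))) x y = 0 := by
  set α : ℝ := (n : ℝ) / 2 + s
  have hw : 0 < ‖x‖ ^ 2 + y ^ 2 := by positivity
  have hpow : ∀ {c q u : ℝ}, 0 < u + c →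
      HasDerivAt (fun v : ℝ => (v + c) ^ q) (q * (u + c) ^ (q - 1)) u := fun h =>
    (((hasDerivAt_id _).add_const _).rpow_const (Or.inl h.ne')).congr_deriv (by ring)
  have hlap := sum_deriv_deriv_comp_norm_add_single_sq
    (h := fun u => y ^ (2 * s) * (u + y ^ 2) ^ (-α)) (h' := fun u => y ^ (2 * s) * (-α * (u + y ^ 2) ^ (-α - 1))) x
    (fun u hu => (hpow (by positivity)).const_mul _) ((hpow hw).const_mul _ |>.const_mul _)
  beta_reduce at hlap
  unfold extensionOperator
  rw [hlap, (hasDerivAt_rpow_mul_add_sq_rpow _ _ hy.ne' hw).deriv,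
    deriv_deriv_rpow_mul_add_sq_rpow _ _ (sq_nonneg ‖x‖) hy]
  simp only [rpow_sub_one hy.ne', rpow_add_one hy.ne', rpow_sub_one hw.ne', rpow_sub hy,
    rpow_add hy, rpow_sub hw, rpow_two]
  generalize y ^ (2 * s) = A
  generalize (‖x‖ ^ 2 + y ^ 2) ^ (-α) = B
  generalize ‖x‖ ^ 2 = u at hw ⊢
  simp only [α]
  field_simp
  ring

theorem poissonKernel_satisfies_pde_general
    (n : ℕ) (s : ℝ)
    (x : EuclideanSpace ℝ (Fin n)) (y : ℝ) (hy : 0 < y) :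
    ((1 - 2 * s) / (2 * y)) * deriv (fun y' : ℝ => fracPoissonKernel n s y' x) y
      + (1 / 2) *
        ((∑ i : Fin n,
            deriv (deriv (fun t : ℝ =>
              fracPoissonKernel n s y (x + t • EuclideanSpace.single i (1 : ℝ)))) 0)
          + deriv (deriv (fun y' : ℝ => fracPoissonKernel n s y' x)) y) = 0 := by
  change extensionOperator n s (fracPoissonKernel n s) x y = 0
  rw [fracPoissonKernel_eq_const_mul, extensionOperator_const_mul,
    extensionOperator_rpow_mul_norm_sq_add_sq_rpow n s x hy, mul_zero]

/-- At every point `(x, y)` with `y > 0`, the Poisson-type kernel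
`K(x,y) = C_{n,s} · y^{2s}/(|x|² + y²)^{n/2 + s}` satisfies
`((1 − 2s)/(2y)) · ∂K/∂y + (1/2) Δ_{x,y} K = 0`, where `Δ_{x,y}` is the Laplacian in
all `n + 1` variables `(x₁, …, xₙ, y)`. -/
theorem poissonKernel_satisfies_pde
    (n : ℕ) (hn : 1 ≤ n) (s : ℝ) (hs : s ∈ Set.Ioo (0 : ℝ) 1)
    (x : EuclideanSpace ℝ (Fin n)) (y : ℝ) (hy : 0 < y) :
    ((1 - 2 * s) / (2 * y)) * deriv (fun y' : ℝ => fracPoissonKernel n s y' x) y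
      + (1 / 2) *
        ((∑ i : Fin n,
            deriv (deriv (fun t : ℝ =>
              fracPoissonKernel n s y (x + t • EuclideanSpace.single i (1 : ℝ)))) 0)
          + deriv (deriv (fun y' : ℝ => fracPoissonKernel n s y' x)) y) = 0 :=
  poissonKernel_satisfies_pde_general n s x y hy
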